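/- arXiv:1510.09221 — 2 statements merged into one kernel-verified Lean document; each statement's English description precedes it below -/
import Mathlib

section
/- The deterministic system on ℝ⁴ given by ẋ₁ = -νx₁ + α(x₁x₃ - x₂x₄), ẋ₂ = -νx₂ + α(x₂x₃ + x₁x₄), ẋ₃ = -νx₃ + β(x₁x₃ - x₂x₄), ẋ₄ = -νx₄ + β(x₂x₃ + x₁x₄) has exactly two fixed points: the origin (0,0,0,0) and the point (ν/β, 0, ν/α, 0). -/
/-!
With `z = x1 + x2 i` and `w = x3 + x4 i` the system is `ż = -ν z + α z w`, `ẇ = -ν w + β z w`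
over `ℂ`. At a fixed point, `β ż - α ẇ = ν (α w - β z)` forces `α w = β z`, and then
`ż = z (α w - ν) = 0` leaves `z = w = 0` or `α w = β z = ν`.
-/

theorem product_system_eq_zero_iff {K : Type*} [Field K] {ν α β : K} (hν : ν ≠ 0) (hα : α ≠ 0)
    (hβ : β ≠ 0) (z w : K) :
    (-ν * z + α * (z * w) = 0 ∧ -ν * w + β * (z * w) = 0) ↔
      (z, w) = (0, 0) ∨ (z, w) = (ν / β, ν / α) := by
  constructor
  · rintro ⟨hz, hw⟩
    have hαβ : α * w = β * z := by
      have : ν * (α * w - β * z) = 0 := by linear_combination β * hz - α * hw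
      exact sub_eq_zero.mp ((mul_eq_zero.mp this).resolve_left hν)
    have : z * (α * w - ν) = 0 := by linear_combination hz
    rcases mul_eq_zero.mp this with rfl | hw'
    · have : w = 0 := by simpa [hα] using hαβ
      simp [this]
    · right
      rw [sub_eq_zero] at hw'
      rw [Prod.mk.injEq, eq_div_iff hβ, eq_div_iff hα, mul_comm z, mul_comm w]
      exact ⟨hαβ ▸ hw', hw'⟩
  · rintro (h | h) <;> obtain ⟨rfl, rfl⟩ := Prod.mk.inj h
    · simp
    · constructor <;> field_simp <;> ring

/-- The deterministic system on ℝ⁴ has exactly two fixed points: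
the origin and (ν/β, 0, ν/α, 0). -/
theorem fixed_points_of_system (ν α β : ℝ) (hν : 0 < ν) (hα : α ≠ 0) (hβ : β ≠ 0) :
    ∀ x1 x2 x3 x4 : ℝ,
      (-ν * x1 + α * (x1 * x3 - x2 * x4) = 0 ∧
       -ν * x2 + α * (x2 * x3 + x1 * x4) = 0 ∧
       -ν * x3 + β * (x1 * x3 - x2 * x4) = 0 ∧
       -ν * x4 + β * (x2 * x3 + x1 * x4) = 0)
      ↔ (((x1, x2, x3, x4) : ℝ × ℝ × ℝ × ℝ) = (0, 0, 0, 0) ∨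
         ((x1, x2, x3, x4) : ℝ × ℝ × ℝ × ℝ) = (ν / β, 0, ν / α, 0)) := by
  intro x1 x2 x3 x4
  have hℂ := product_system_eq_zero_iff (K := ℂ) (ν := ν) (α := α) (β := β)
    (by exact_mod_cast hν.ne') (by exact_mod_cast hα) (by exact_mod_cast hβ) ⟨x1, x2⟩ ⟨x3, x4⟩
  simp only [Complex.ext_iff, Prod.mk.injEq, ← Complex.ofReal_div, Complex.ofReal_re,
    Complex.ofReal_im, Complex.add_re, Complex.add_im, Complex.mul_re, Complex.mul_im,
    Complex.neg_re, Complex.neg_im, Complex.zero_re, Complex.zero_im, zero_mul, sub_zero,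
    add_zero, neg_zero, and_assoc, add_comm (x1 * x4)] at hℂ
  simpa only [Prod.mk.injEq] using hℂ
end

section
/- Under the linear change of coordinates y₁ = (x₁ + (α/β)x₃)/2, y₂ = (x₁ - (α/β)x₃)/2, y₃ = (x₂ + (α/β)x₄)/2, y₄ = (x₂ - (α/β)x₄)/2, the system ẋ₁ = -νx₁ + α(x₁x₃ - x₂x₄), ẋ₂ = -νx₂ + α(x₂x₃ + x₁x₄), ẋ₃ = -νx₃ + β(x₁x₃ - x₂x₄), ẋ₄ = -νx₄ + β(x₂x₃ + x₁x₄) transforms into ẏ₁ = -νy₁ + β[(y₁² - y₂²) - (y₃² - y₄²)], ẏ₂ = -νy₂, ẏ₃ = -νy₃ + 2β(y₁y₃ - y₂y₄), ẏ₄ = -νy₄. -/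
/-!
Put `k = α / β`, so that `k β = α`. The pairs `x₁, x₃` and `x₂, x₄` decay at the same rate `ν`
and share their quadratic forcing, with weights `α` and `β`. So in `x₁ - k x₃` the forcing
cancels, while in `x₁ + k x₃` it doubles; the doubled forcing is rewritten in the new
coordinates through `y₁² - y₂² = k x₁ x₃` and `2 (y₁ y₃ - y₂ y₄) = k (x₁ x₄ + x₂ x₃)`.
-/

section CommonForcing

variable {f g : ℝ → ℝ} {ν a b k p t : ℝ}

theorem HasDerivAt.half_add_of_common_forcing (hf : HasDerivAt f (-ν * f t + a * p) t)
    (hg : HasDerivAt g (-ν * g t + b * p) t) (hk : k * b = a) :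
    HasDerivAt (fun s => (f s + k * g s) / 2) (-ν * ((f t + k * g t) / 2) + a * p) t := by
  refine ((hf.add (hg.const_mul k)).div_const 2).congr_deriv ?_
  linear_combination (p / 2) * hk

theorem HasDerivAt.half_sub_of_common_forcing (hf : HasDerivAt f (-ν * f t + a * p) t)
    (hg : HasDerivAt g (-ν * g t + b * p) t) (hk : k * b = a) :
    HasDerivAt (fun s => (f s - k * g s) / 2) (-ν * ((f t - k * g t) / 2)) t := by
  refine ((hf.sub (hg.const_mul k)).div_const 2).congr_deriv ?_
  linear_combination (-p / 2) * hk

end CommonForcing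

theorem coordinate_change_transforms_system_general (ν α β : ℝ) (hβ : β ≠ 0)
    (x1 x2 x3 x4 : ℝ → ℝ)
    (h1 : ∀ t, HasDerivAt x1 (-ν * x1 t + α * (x1 t * x3 t - x2 t * x4 t)) t)
    (h2 : ∀ t, HasDerivAt x2 (-ν * x2 t + α * (x2 t * x3 t + x1 t * x4 t)) t)
    (h3 : ∀ t, HasDerivAt x3 (-ν * x3 t + β * (x1 t * x3 t - x2 t * x4 t)) t)
    (h4 : ∀ t, HasDerivAt x4 (-ν * x4 t + β * (x2 t * x3 t + x1 t * x4 t)) t)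
    (y1 y2 y3 y4 : ℝ → ℝ)
    (hy1 : y1 = fun t => (x1 t + (α / β) * x3 t) / 2)
    (hy2 : y2 = fun t => (x1 t - (α / β) * x3 t) / 2)
    (hy3 : y3 = fun t => (x2 t + (α / β) * x4 t) / 2)
    (hy4 : y4 = fun t => (x2 t - (α / β) * x4 t) / 2) :
    (∀ t, HasDerivAt y1
      (-ν * y1 t + β * ((y1 t ^ 2 - y2 t ^ 2) - (y3 t ^ 2 - y4 t ^ 2))) t) ∧
    (∀ t, HasDerivAt y2 (-ν * y2 t) t) ∧
    (∀ t, HasDerivAt y3 (-ν * y3 t + 2 * β * (y1 t * y3 t - y2 t * y4 t)) t) ∧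
    (∀ t, HasDerivAt y4 (-ν * y4 t) t) := by
  have hk : α / β * β = α := div_mul_cancel₀ α hβ
  subst hy1 hy2 hy3 hy4
  refine ⟨fun t => ?_, fun t => (h1 t).half_sub_of_common_forcing (h3 t) hk,
    fun t => ?_, fun t => (h2 t).half_sub_of_common_forcing (h4 t) hk⟩
  · convert (h1 t).half_add_of_common_forcing (h3 t) hk using 2
    linear_combination (x1 t * x3 t - x2 t * x4 t) * hk
  · convert (h2 t).half_add_of_common_forcing (h4 t) hk using 2
    linear_combination (x2 t * x3 t + x1 t * x4 t) * hk

/-- Under the linear change of coordinates, the x-system transforms into the y-system. -/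
theorem coordinate_change_transforms_system (ν α β : ℝ) (hα : α ≠ 0) (hβ : β ≠ 0)
    (x1 x2 x3 x4 : ℝ → ℝ)
    (h1 : ∀ t, HasDerivAt x1 (-ν * x1 t + α * (x1 t * x3 t - x2 t * x4 t)) t)
    (h2 : ∀ t, HasDerivAt x2 (-ν * x2 t + α * (x2 t * x3 t + x1 t * x4 t)) t)
    (h3 : ∀ t, HasDerivAt x3 (-ν * x3 t + β * (x1 t * x3 t - x2 t * x4 t)) t)
    (h4 : ∀ t, HasDerivAt x4 (-ν * x4 t + β * (x2 t * x3 t + x1 t * x4 t)) t)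
    (y1 y2 y3 y4 : ℝ → ℝ)
    (hy1 : y1 = fun t => (x1 t + (α / β) * x3 t) / 2)
    (hy2 : y2 = fun t => (x1 t - (α / β) * x3 t) / 2)
    (hy3 : y3 = fun t => (x2 t + (α / β) * x4 t) / 2)
    (hy4 : y4 = fun t => (x2 t - (α / β) * x4 t) / 2) :
    (∀ t, HasDerivAt y1
      (-ν * y1 t + β * ((y1 t ^ 2 - y2 t ^ 2) - (y3 t ^ 2 - y4 t ^ 2))) t) ∧
    (∀ t, HasDerivAt y2 (-ν * y2 t) t) ∧
    (∀ t, HasDerivAt y3 (-ν * y3 t + 2 * β * (y1 t * y3 t - y2 t * y4 t)) t) ∧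
    (∀ t, HasDerivAt y4 (-ν * y4 t) t) :=
  coordinate_change_transforms_system_general ν α β hβ x1 x2 x3 x4 h1 h2 h3 h4 y1 y2 y3 y4 hy1 hy2
    hy3 hy4
end
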